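/- Let M be an operator valued mean on Ω with M(∞) = O, and let M₀ be the unique positive operator measure with M(f) = ∫ f dM₀ (weakly) for f ∈ C_c(Ω). Then M(f) = ∫ f dM₀ for all f ∈ BC(Ω), given that for every unit vector ψ the scalar mean m_ψ(f) = ⟨ψ, M(f)ψ⟩ satisfies m_ψ(∞) = ⟨ψ, M(∞)ψ⟩. -/

import Mathlib

/-!
Fix `ψ`. The scalar mean `m_ψ` is a positive functional on `BC(Ω)` with `m_ψ(1) = ‖ψ‖²` that
agrees with `∫ · dν_ψ` on `C_c(Ω)`. The hypothesis `m_ψ(∞) = 0` provides `g ∈ C_c(Ω)` with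
`0 ≤ g ≤ 1` and `m_ψ(1 - g) < ε`. Positivity bounds `|m_ψ(f (1 - g))|` by `2 ‖f‖ m_ψ(1 - g)`;
inner regularity of `ν_ψ` and Urysohn's lemma give `ν_ψ(Ω) ≤ ‖ψ‖²`, whence
`∫ (1 - g) dν_ψ ≤ m_ψ(1 - g)`. As `m_ψ(f g) = ∫ f g dν_ψ`, the two sides of the claim differ by
at most `3 ‖f‖ ε`.
-/

open MeasureTheory BoundedContinuousFunction

/-- `f` is a continuous compactly supported function with `0 ≤ f ≤ 1`. -/
def CcPosLeOne {α : Type*} [TopologicalSpace α] (f : α →ᵇ ℂ) : Prop :=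
  HasCompactSupport ⇑f ∧ ∀ x, (f x).im = 0 ∧ 0 ≤ (f x).re ∧ (f x).re ≤ 1

open scoped ComplexOrder InnerProductSpace
open Complex Set Filter Topology

theorem Complex.norm_le_re_of_neg_le_of_le {z a : ℂ} (h₁ : -a ≤ z) (h₂ : z ≤ a) :
    ‖z‖ ≤ a.re := by
  obtain ⟨hre₁, him₁⟩ := le_def.1 h₁
  obtain ⟨hre₂, him₂⟩ := le_def.1 h₂
  have hz : z.im = 0 := by rw [neg_im] at him₁; linarith
  rw [← abs_re_eq_norm.2 hz]
  exact abs_le.2 ⟨by simpa using hre₁, hre₂⟩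

theorem ccPosLeOne_zero {α : Type*} [TopologicalSpace α] : CcPosLeOne (0 : α →ᵇ ℂ) :=
  ⟨HasCompactSupport.zero, by simp⟩

theorem CcPosLeOne.nonneg_one_sub {α : Type*} [TopologicalSpace α] {g : α →ᵇ ℂ}
    (hg : CcPosLeOne g) (x : α) : 0 ≤ (1 - g) x := by
  obtain ⟨him, -, hle⟩ := hg.2 x
  rw [nonneg_iff]
  simp [him, hle]

namespace BoundedContinuousFunction

variable {Ω : Type*} [TopologicalSpace Ω] {T : (Ω →ᵇ ℂ) →ₗ[ℂ] ℂ}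

theorem apply_mono_of_nonneg (hT : ∀ h : Ω →ᵇ ℂ, (∀ x, 0 ≤ h x) → 0 ≤ T h)
    {g h : Ω →ᵇ ℂ} (hgh : ∀ x, g x ≤ h x) : T g ≤ T h := by
  simpa [sub_nonneg] using hT (h - g) fun x => sub_nonneg.2 (hgh x)

theorem norm_apply_mul_le_of_mem_Icc (hT : ∀ h : Ω →ᵇ ℂ, (∀ x, 0 ≤ h x) → 0 ≤ T h)
    {w h : Ω →ᵇ ℂ} {c : ℝ} (hw : ∀ x, w x ∈ Icc (-(c : ℂ)) c) (hh : ∀ x, 0 ≤ h x) :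
    ‖T (w * h)‖ ≤ c * (T h).re := by
  have hc : (c : ℂ) * T h = T ((c : ℂ) • h) := by rw [map_smul, smul_eq_mul]
  rw [← re_ofReal_mul, hc]
  refine norm_le_re_of_neg_le_of_le ?_ ?_
  · rw [← map_neg, ← neg_smul]
    exact apply_mono_of_nonneg hT fun x => mul_le_mul_of_nonneg_right (hw x).1 (hh x)
  · exact apply_mono_of_nonneg hT fun x => mul_le_mul_of_nonneg_right (hw x).2 (hh x)

theorem norm_apply_mul_le (hT : ∀ h : Ω →ᵇ ℂ, (∀ x, 0 ≤ h x) → 0 ≤ T h)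
    (f : Ω →ᵇ ℂ) {h : Ω →ᵇ ℂ} (hh : ∀ x, 0 ≤ h x) :
    ‖T (f * h)‖ ≤ 2 * ‖f‖ * (T h).re := by
  let u : Ω →ᵇ ℂ := f.comp _ (ofRealCLM.comp reCLM).lipschitz
  let v : Ω →ᵇ ℂ := f.comp _ (ofRealCLM.comp imCLM).lipschitz
  have hbound {r : ℝ} (hr : |r| ≤ ‖f‖) : -(‖f‖ : ℂ) ≤ r ∧ (r : ℂ) ≤ ‖f‖ := by
    rw [← ofReal_neg, real_le_real, real_le_real]
    exact abs_le.1 hr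
  have hsplit : f * h = u * h + I • (v * h) := by
    ext x
    simp only [coe_mul, coe_add, coe_smul, Pi.mul_apply, Pi.add_apply, smul_eq_mul,
      u, v, comp_apply, ContinuousLinearMap.comp_apply, ofRealCLM_apply, reCLM_apply, imCLM_apply]
    conv_lhs => rw [← re_add_im (f x)]
    ring
  calc ‖T (f * h)‖ = ‖T (u * h) + I * T (v * h)‖ := by
        rw [hsplit, map_add, map_smul, smul_eq_mul]
    _ ≤ ‖T (u * h)‖ + ‖T (v * h)‖ := by simpa using norm_add_le (T (u * h)) (I * T (v * h))
    _ ≤ ‖f‖ * (T h).re + ‖f‖ * (T h).re := by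
        gcongr
        · exact norm_apply_mul_le_of_mem_Icc hT
            (fun x => hbound ((abs_re_le_norm _).trans (f.norm_coe_le_norm x))) hh
        · exact norm_apply_mul_le_of_mem_Icc hT
            (fun x => hbound ((abs_im_le_norm _).trans (f.norm_coe_le_norm x))) hh
    _ = 2 * ‖f‖ * (T h).re := by ring

variable [MeasurableSpace Ω] [BorelSpace Ω] {μ : Measure Ω} [IsFiniteMeasure μ]

theorem measure_le_ofReal_re_apply_one [RegularSpace Ω] [LocallyCompactSpace Ω]
    (hT : ∀ h : Ω →ᵇ ℂ, (∀ x, 0 ≤ h x) → 0 ≤ T h)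
    (hrep : ∀ g : Ω →ᵇ ℂ, HasCompactSupport g → T g = ∫ x, g x ∂μ)
    {K : Set Ω} (hK : IsCompact K) : μ K ≤ ENNReal.ofReal (T 1).re := by
  obtain ⟨χ, hχK, -, hχc, hχ01⟩ :=
    exists_continuous_one_zero_of_isCompact hK isClosed_empty (disjoint_empty K)
  have hgc : HasCompactSupport fun x => (χ x : ℂ) := hχc.comp_left ofReal_zero
  let g : Ω →ᵇ ℂ := ofCompactSupport _ (by fun_prop) hgc
  have hχT : ∫ x, χ x ∂μ = (T g).re := by
    rw [hrep g hgc]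
    exact integral_re (g.integrable μ)
  calc μ K ≤ ENNReal.ofReal (∫ x, χ x ∂μ) :=
        ((g.integrable μ).re.congr (ae_of_all _ fun _ => rfl)).measure_le_integral
          (ae_of_all _ fun x => (hχ01 x).1) fun x hx => (hχK hx).ge
    _ ≤ ENNReal.ofReal (T 1).re := by
        rw [hχT]
        gcongr
        exact apply_mono_of_nonneg hT fun x => (real_le_real.2 (hχ01 x).2).trans_eq ofReal_one

theorem measureReal_univ_le_re_apply_one [RegularSpace Ω] [LocallyCompactSpace Ω] [μ.Regular]
    (hT : ∀ h : Ω →ᵇ ℂ, (∀ x, 0 ≤ h x) → 0 ≤ T h)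
    (hrep : ∀ g : Ω →ᵇ ℂ, HasCompactSupport g → T g = ∫ x, g x ∂μ) :
    μ.real univ ≤ (T 1).re := by
  refine ENNReal.toReal_le_of_le_ofReal (nonneg_iff.1 (hT 1 fun _ => zero_le_one)).1 ?_
  rw [isOpen_univ.measure_eq_iSup_isCompact μ]
  exact iSup₂_le fun K _ => iSup_le fun hK => measure_le_ofReal_re_apply_one hT hrep hK

theorem integral_re_one_sub_le (hrep : ∀ g : Ω →ᵇ ℂ, HasCompactSupport g → T g = ∫ x, g x ∂μ)
    (huniv : μ.real univ ≤ (T 1).re) {g : Ω →ᵇ ℂ} (hg : HasCompactSupport g) :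
    ∫ x, ((1 - g) x).re ∂μ ≤ (T (1 - g)).re := by
  have hre := integral_re ((1 - g).integrable μ)
  simp only [RCLike.re_to_complex] at hre
  rw [hre]
  simp only [map_sub, coe_sub, coe_one, Pi.sub_apply, Pi.one_apply]
  rw [integral_sub (integrable_const 1) (g.integrable μ), ← hrep g hg, integral_const]
  simpa using huniv

theorem norm_apply_sub_integral_le (hT : ∀ h : Ω →ᵇ ℂ, (∀ x, 0 ≤ h x) → 0 ≤ T h)
    (hrep : ∀ g : Ω →ᵇ ℂ, HasCompactSupport g → T g = ∫ x, g x ∂μ)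
    (huniv : μ.real univ ≤ (T 1).re) (f : Ω →ᵇ ℂ) {g : Ω →ᵇ ℂ} (hg : CcPosLeOne g) :
    ‖T f - ∫ x, f x ∂μ‖ ≤ 3 * ‖f‖ * (T (1 - g)).re := by
  set h := 1 - g
  have hh : ∀ x, 0 ≤ h x := hg.nonneg_one_sub
  have hfg : T (f * g) = ∫ x, (f * g) x ∂μ := hrep _ (by rw [coe_mul]; exact hg.1.mul_left)
  have hsplit : T f - ∫ x, f x ∂μ = T (f * h) - ∫ x, (f * h) x ∂μ := by
    have hf : f = f * h + f * g := by rw [← mul_add, sub_add_cancel, mul_one]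
    have hTf : T f = T (f * h) + T (f * g) := by rw [← map_add, ← hf]
    have hIf : ∫ x, f x ∂μ = ∫ x, (f * h) x ∂μ + ∫ x, (f * g) x ∂μ := by
      rw [← integral_add ((f * h).integrable μ) ((f * g).integrable μ)]
      conv_lhs => rw [hf]
      rfl
    rw [hTf, hIf, hfg]
    ring
  have hint : ‖∫ x, (f * h) x ∂μ‖ ≤ ‖f‖ * (T h).re := calc
    ‖∫ x, (f * h) x ∂μ‖ ≤ ∫ x, ‖f‖ * (h x).re ∂μ :=
        norm_integral_le_of_norm_le ((h.integrable μ).re.const_mul _) <| ae_of_all _ fun x => by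
          rw [coe_mul, Pi.mul_apply, norm_mul, ← re_eq_norm.2 (hh x)]
          exact mul_le_mul_of_nonneg_right (f.norm_coe_le_norm x) (nonneg_iff.1 (hh x)).1
    _ = ‖f‖ * ∫ x, (h x).re ∂μ := integral_const_mul _ _
    _ ≤ ‖f‖ * (T h).re := by gcongr; exact integral_re_one_sub_le hrep huniv hg.1
  calc ‖T f - ∫ x, f x ∂μ‖ = ‖T (f * h) - ∫ x, (f * h) x ∂μ‖ := by rw [hsplit]
    _ ≤ ‖T (f * h)‖ + ‖∫ x, (f * h) x ∂μ‖ := norm_sub_le _ _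
    _ ≤ 2 * ‖f‖ * (T h).re + ‖f‖ * (T h).re := add_le_add (norm_apply_mul_le hT f hh) hint
    _ = 3 * ‖f‖ * (T h).re := by ring

theorem apply_eq_integral_of_approx_one [RegularSpace Ω] [LocallyCompactSpace Ω] [μ.Regular]
    (hT : ∀ h : Ω →ᵇ ℂ, (∀ x, 0 ≤ h x) → 0 ≤ T h)
    (hrep : ∀ g : Ω →ᵇ ℂ, HasCompactSupport g → T g = ∫ x, g x ∂μ)
    (happrox : ∀ r < (T 1).re, ∃ g, CcPosLeOne g ∧ r < (T g).re) (f : Ω →ᵇ ℂ) :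
    T f = ∫ x, f x ∂μ := by
  have huniv := measureReal_univ_le_re_apply_one hT hrep
  have hsmall : ∀ ε > 0, ‖T f - ∫ x, f x ∂μ‖ ≤ 3 * ‖f‖ * ε := by
    intro ε hε
    obtain ⟨g, hg, hgε⟩ := happrox ((T 1).re - ε) (by linarith)
    refine (norm_apply_sub_integral_le hT hrep huniv f hg).trans ?_
    gcongr
    rw [map_sub, sub_re]
    linarith
  have hlim : Tendsto (fun ε => 3 * ‖f‖ * ε) (𝓝[>] 0) (𝓝 0) :=
    ((continuous_const_mul (3 * ‖f‖)).tendsto' 0 0 (mul_zero _)).mono_left nhdsWithin_le_nhds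
  rw [← sub_eq_zero, ← norm_le_zero_iff]
  exact ge_of_tendsto hlim (eventually_nhdsWithin_of_forall hsmall)

end BoundedContinuousFunction

section ScalarMean

variable {E H : Type*} [AddCommMonoid E] [Module ℂ E] [NormedAddCommGroup H]
  [InnerProductSpace ℂ H]

noncomputable def scalarMean (M : E →ₗ[ℂ] H →L[ℂ] H) (ψ : H) : E →ₗ[ℂ] ℂ :=
  innerₛₗ ℂ ψ ∘ₗ (ContinuousLinearMap.apply ℂ H ψ).toLinearMap ∘ₗ M

@[simp]
theorem scalarMean_apply (M : E →ₗ[ℂ] H →L[ℂ] H) (ψ : H) (f : E) :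
    scalarMean M ψ f = ⟪ψ, M f ψ⟫_ℂ :=
  rfl

theorem scalarMean_smul (M : E →ₗ[ℂ] H →L[ℂ] H) (c : ℂ) (ψ : H) (f : E) :
    scalarMean M (c • ψ) f = (‖c‖ ^ 2 : ℂ) * scalarMean M ψ f := by
  rw [scalarMean_apply, scalarMean_apply, map_smul, inner_smul_left, inner_smul_right,
    ← mul_assoc, conj_mul']

theorem exists_lt_re_scalarMean {Ω : Type*} [TopologicalSpace Ω]
    {M : (Ω →ᵇ ℂ) →ₗ[ℂ] H →L[ℂ] H}
    (hsup : ∀ ψ : H, ‖ψ‖ = 1 →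
      sSup {r : ℝ | ∃ f : Ω →ᵇ ℂ, CcPosLeOne f ∧ r = (⟪ψ, M f ψ⟫_ℂ).re} = 1)
    (ψ : H) {r : ℝ} (hr : r < ‖ψ‖ ^ 2) :
    ∃ g, CcPosLeOne g ∧ r < (scalarMean M ψ g).re := by
  rcases eq_or_ne ψ 0 with rfl | hψ
  · exact ⟨0, ccPosLeOne_zero, by simpa using hr⟩
  set u : H := (‖ψ‖⁻¹ : ℂ) • ψ
  have hψu : ψ = (‖ψ‖ : ℂ) • u := by
    rw [smul_smul, mul_inv_cancel₀ (by simpa using hψ), one_smul]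
  have hψ2 : 0 < ‖ψ‖ ^ 2 := by positivity
  let S := {r : ℝ | ∃ f : Ω →ᵇ ℂ, CcPosLeOne f ∧ r = (⟪u, M f u⟫_ℂ).re}
  have hS : S.Nonempty := ⟨0, 0, ccPosLeOne_zero, by simp⟩
  have hlt : r / ‖ψ‖ ^ 2 < sSup S := by
    rw [hsup u (norm_smul_inv_norm hψ), div_lt_one hψ2]
    exact hr
  obtain ⟨_, ⟨g, hg, rfl⟩, hgr⟩ := exists_lt_of_lt_csSup hS hlt
  refine ⟨g, hg, ?_⟩
  rw [hψu, scalarMean_smul, norm_real, Real.norm_of_nonneg (norm_nonneg ψ), ← ofReal_pow,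
    re_ofReal_mul]
  rwa [div_lt_iff₀' hψ2] at hgr

end ScalarMean

/-- The positive operator measure `M₀` is encoded by the scalar measures `ν ψ = ⟨ψ, M₀(·)ψ⟩`,
and `M(∞) = O` by `sup {m_ψ(f) : f ∈ C_c⁺(Ω), f ≤ 1} = 1` for unit vectors `ψ`. -/
theorem stmt18 {Ω : Type*} [MetricSpace Ω] [LocallyCompactSpace Ω]
    [MeasurableSpace Ω] [BorelSpace Ω]
    {H : Type*} [NormedAddCommGroup H] [InnerProductSpace ℂ H]
    (M : (Ω →ᵇ ℂ) →ₗ[ℂ] (H →L[ℂ] H))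
    (hpos : ∀ f : Ω →ᵇ ℂ, (∀ x, (f x).im = 0 ∧ 0 ≤ (f x).re) → (M f).IsPositive)
    (hone : M (const Ω (1 : ℂ)) = 1)
    (ν : H → Measure Ω) [∀ ψ, IsFiniteMeasure (ν ψ)] [∀ ψ, (ν ψ).Regular]
    (hrep : ∀ (ψ : H) (f : Ω →ᵇ ℂ), HasCompactSupport ⇑f →
      (inner ℂ ψ (M f ψ) : ℂ) = ∫ x, f x ∂(ν ψ))
    (hMinf : ∀ ψ : H, ‖ψ‖ = 1 →
      sSup {r : ℝ | ∃ f : Ω →ᵇ ℂ, CcPosLeOne f ∧ r = (inner ℂ ψ (M f ψ) : ℂ).re} = 1) :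
    ∀ (f : Ω →ᵇ ℂ) (ψ : H), (inner ℂ ψ (M f ψ) : ℂ) = ∫ x, f x ∂(ν ψ) := by
  intro f ψ
  have hT (h : Ω →ᵇ ℂ) (hh : ∀ x, 0 ≤ h x) : 0 ≤ scalarMean M ψ h :=
    (hpos h fun x => let ⟨hre, him⟩ := nonneg_iff.1 (hh x); ⟨him.symm, hre⟩).inner_nonneg_right ψ
  have hT1 : (scalarMean M ψ 1).re = ‖ψ‖ ^ 2 := by
    rw [scalarMean_apply, show M 1 = 1 from hone]
    exact inner_self_eq_norm_sq (𝕜 := ℂ) ψ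
  exact apply_eq_integral_of_approx_one hT (hrep ψ)
    (fun r hr => exists_lt_re_scalarMean hMinf ψ (hT1 ▸ hr)) f
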